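/- Let Δ ⊂ Γ_V satisfy the monotonicity condition (τ_V(x₀) − τ_V(x₁))(τ_V(y₀) − τ_V(y₁)) ≥ 0 for all (x₀,y₀),(x₁,y₁) ∈ Δ. Then Δ is ℓ^p-cyclically monotone for every p ∈ (0,1). -/

import Mathlib

open Classical

/-- The cost `ℓ(x,z) = τ(x,z)` if `x ≤ z`, and `−∞` otherwise. -/
noncomputable def ellC {X : Type*} (le : X → X → Prop) (τ : X → X → ℝ) : X → X → EReal :=
  fun x z => if le x z then ((τ x z : ℝ) : EReal) else ⊥

/-- The chronological future `I⁺(V)` of a set `V`. -/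
def IplusSet {X : Type*} (chron : X → X → Prop) (V : Set X) : Set X :=
  {x | ∃ v ∈ V, chron v x}

/-- The transport relation associated to an achronal set `V`:
`Γ_V = {(x,z) ∈ (I⁺(V) ∪ V)² : x ≤ z, τ_V(z) − τ_V(x) = τ(x,z) > 0} ∪ diagonal`. -/
def GammaV {X : Type*} (le chron : X → X → Prop) (τ : X → X → ℝ) (τV : X → ℝ)
    (V : Set X) : Set (X × X) :=
  {q | (q.1 ∈ IplusSet chron V ∪ V ∧ q.2 ∈ IplusSet chron V ∪ V ∧ le q.1 q.2 ∧
          τV q.2 - τV q.1 = τ q.1 q.2 ∧ 0 < τ q.1 q.2) ∨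
       (q.1 = q.2 ∧ q.1 ∈ IplusSet chron V ∪ V)}

/-- The cost `ℓ^p(x,z) = τ(x,z)^p` if `x ≤ z`, and `−∞` otherwise. -/
noncomputable def ellPow {X : Type*} (le : X → X → Prop) (τ : X → X → ℝ) (p : ℝ) :
    X → X → EReal := fun x z => if le x z then ((τ x z ^ p : ℝ) : EReal) else ⊥

private lemma two_point {p : ℝ} (hp : p ∈ Set.Ioo (0 : ℝ) 1) {s t s' t' : ℝ}
    (ht : 0 ≤ t) (h1 : t ≤ s') (h2 : t ≤ t') (hsum : s + t = s' + t') :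
    s ^ p + t ^ p ≤ s' ^ p + t' ^ p := by
  have hconc := Real.concaveOn_rpow hp.1.le hp.2.le
  have hts : t ≤ s := by linarith
  rcases eq_or_lt_of_le hts with heq | hlt
  · have hs' : s' = t := le_antisymm (by linarith) h1
    have ht' : t' = t := le_antisymm (by linarith) h2
    rw [hs', ht', ← heq]
  · set θ : ℝ := (s' - t) / (s - t) with hθdef
    have hst : (0:ℝ) < s - t := by linarith
    have hθ0 : 0 ≤ θ := div_nonneg (by linarith) hst.le
    have hθ1 : θ ≤ 1 := by
      rw [div_le_one hst]; linarith
    have hss : 0 ≤ s := by linarith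
    have hcancel : θ * (s - t) = s' - t := div_mul_cancel₀ (s' - t) hst.ne'
    have e1 : θ * s + (1 - θ) * t = s' := by linear_combination hcancel
    have e2 : (1 - θ) * s + θ * t = t' := by linarith [e1]
    have i1 := hconc.2 (Set.mem_Ici.mpr hss) (Set.mem_Ici.mpr ht)
      hθ0 (by linarith : (0:ℝ) ≤ 1 - θ) (show θ + (1 - θ) = 1 by ring)
    have i2 := hconc.2 (Set.mem_Ici.mpr hss) (Set.mem_Ici.mpr ht)
      (by linarith : (0:ℝ) ≤ 1 - θ) hθ0 (show (1 - θ) + θ = 1 by ring)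
    simp only [smul_eq_mul] at i1 i2
    rw [e1] at i1
    rw [e2] at i2
    linarith [i1, i2]

private lemma perm_aux {n : ℕ} {p : ℝ} (hp : p ∈ Set.Ioo (0 : ℝ) 1)
    (a b : Fin (n + 1) → ℝ)
    (hmono : ∀ i j, 0 ≤ (a i - a j) * (b i - b j))
    (hd : ∀ i, 0 ≤ b i - a i) :
    ∀ (k : ℕ) (σ : Equiv.Perm (Fin (n + 1))), σ.support.card ≤ k →
      (∀ i, 0 ≤ b i - a (σ i)) →
      ∑ i, (b i - a (σ i)) ^ p ≤ ∑ i, (b i - a i) ^ p := by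
  intro k
  induction k with
  | zero =>
    intro σ hcard _
    have : σ = 1 := by
      rw [← Equiv.Perm.support_eq_empty_iff]
      exact Finset.card_eq_zero.mp (Nat.le_zero.mp hcard)
    subst this; simp
  | succ k IH =>
    intro σ hcard he
    by_cases h1 : σ = 1
    · subst h1; simp
    · -- pick m maximal in support
      have hne : σ.support.Nonempty := by
        rw [Finset.nonempty_iff_ne_empty, Ne, Equiv.Perm.support_eq_empty_iff]; exact h1
      obtain ⟨m, hm, hmax⟩ := σ.support.exists_max_image (fun i => a i + b i) hne
      have hmax' : ∀ i ∈ σ.support, a i ≤ a m ∧ b i ≤ b m := by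
        intro i hi
        have h := hmax i hi
        have h2 := hmono i m
        constructor <;> nlinarith
      set j := σ⁻¹ m with hjdef
      have hσj : σ j = m := Equiv.apply_symm_apply σ m
      have hmm : σ m ≠ m := Equiv.Perm.mem_support.mp hm
      have hjm : j ≠ m := by
        intro h
        rw [h] at hσj; exact hmm hσj
      have hσm_supp : σ m ∈ σ.support := Equiv.Perm.apply_mem_support.mpr hm
      have hj_supp : j ∈ σ.support := by
        rw [Equiv.Perm.mem_support, hσj]; exact Ne.symm (by simpa [hjdef] using hjm)
      set σ' := σ * Equiv.swap j m with hσ'def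
      have hσ'm : σ' m = m := by simp [hσ'def, Equiv.swap_apply_right, hσj]
      have hσ'j : σ' j = σ m := by simp [hσ'def, Equiv.swap_apply_left]
      have hσ'other : ∀ i, i ≠ j → i ≠ m → σ' i = σ i := by
        intro i hij him
        simp [hσ'def, Equiv.swap_apply_of_ne_of_ne hij him]
      -- support of σ' decreases
      have hsubset : σ'.support ⊆ σ.support.erase m := by
        intro i hi
        rw [Equiv.Perm.mem_support] at hi
        rcases eq_or_ne i m with rfl | him
        · exact absurd hσ'm hi
        rcases eq_or_ne i j with rfl | hij
        · exact Finset.mem_erase.mpr ⟨him, hj_supp⟩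
        · rw [hσ'other i hij him] at hi
          exact Finset.mem_erase.mpr ⟨him, Equiv.Perm.mem_support.mpr hi⟩
      have hcard' : σ'.support.card ≤ k := by
        have := Finset.card_le_card hsubset
        rw [Finset.card_erase_of_mem hm] at this
        omega
      -- constraints for σ'
      have haσm : a (σ m) ≤ a m := (hmax' _ hσm_supp).1
      have hbj : b j ≤ b m := (hmax' _ hj_supp).2
      have he' : ∀ i, 0 ≤ b i - a (σ' i) := by
        intro i
        rcases eq_or_ne i m with rfl | him
        · rw [hσ'm]; exact hd _
        rcases eq_or_ne i j with rfl | hij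
        · rw [hσ'j]
          have := he j
          rw [hσj] at this
          linarith
        · rw [hσ'other i hij him]; exact he i
      -- compare costs
      have key : ∑ i, (b i - a (σ i)) ^ p ≤ ∑ i, (b i - a (σ' i)) ^ p := by
        have hjmem : j ∈ Finset.univ.erase m :=
          Finset.mem_erase.mpr ⟨hjm, Finset.mem_univ j⟩
        have hsplit : ∀ c : Fin (n + 1) → ℝ,
            ∑ i, c i = c m + (c j + ∑ i ∈ (Finset.univ.erase m).erase j, c i) := by
          intro c
          rw [Finset.add_sum_erase _ _ hjmem, Finset.add_sum_erase _ _ (Finset.mem_univ m)]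
        rw [hsplit (fun i => (b i - a (σ i)) ^ p), hsplit (fun i => (b i - a (σ' i)) ^ p)]
        have htail : ∑ i ∈ (Finset.univ.erase m).erase j, (b i - a (σ i)) ^ p =
            ∑ i ∈ (Finset.univ.erase m).erase j, (b i - a (σ' i)) ^ p := by
          refine Finset.sum_congr rfl fun i hi => ?_
          rw [Finset.mem_erase, Finset.mem_erase] at hi
          rw [hσ'other i hi.1 hi.2.1]
        rw [htail]
        have htp : (b m - a (σ m)) ^ p + (b j - a m) ^ p ≤
            (b m - a m) ^ p + (b j - a (σ m)) ^ p := by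
          refine two_point hp ?_ ?_ ?_ ?_
          · have := he j; rw [hσj] at this; exact this
          · linarith
          · linarith
          · ring
        rw [hσ'm, hσ'j, hσj]
        linarith
      exact key.trans (IH σ' hcard' he')

private lemma coe_sum_ereal {ι : Type*} (s : Finset ι) (g : ι → ℝ) :
    ((∑ i ∈ s, g i : ℝ) : EReal) = ∑ i ∈ s, ((g i : ℝ) : EReal) := by
  induction s using Finset.cons_induction with
  | empty => simp
  | cons i s hi ih => rw [Finset.sum_cons, Finset.sum_cons, EReal.coe_add, ih]

/-- If `Δ ⊆ Γ_V` satisfies the monotonicity condition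
`(τ_V(x₀) − τ_V(x₁))(τ_V(y₀) − τ_V(y₁)) ≥ 0` for all `(x₀,y₀),(x₁,y₁) ∈ Δ`, then `Δ` is
`ℓ^p`-cyclically monotone for every `p ∈ (0,1)`. -/
theorem stmt_10 {X : Type*} (le chron : X → X → Prop) (τ : X → X → ℝ) (τV : X → ℝ)
    (V : Set X)
    (hrefl : ∀ x, le x x) (htrans : Transitive le)
    (hchron : ∀ a b, chron a b → le a b)
    (hτnn : ∀ x y, 0 ≤ τ x y)
    (hach : ∀ a ∈ V, ∀ b ∈ V, ¬ chron a b)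
    (hkey : ∀ x z, x ∈ IplusSet chron V ∪ V → z ∈ IplusSet chron V ∪ V → le x z →
      τ x z ≤ τV z - τV x)
    (p : ℝ) (hp : p ∈ Set.Ioo (0 : ℝ) 1)
    (Δ : Set (X × X)) (hΔ : Δ ⊆ GammaV le chron τ τV V)
    (hmono : ∀ a ∈ Δ, ∀ b ∈ Δ, 0 ≤ (τV a.1 - τV b.1) * (τV a.2 - τV b.2))
    (n : ℕ) (f : Fin (n + 1) → X × X) (hf : ∀ i, f i ∈ Δ) :
    ∑ i : Fin (n + 1), ellPow le τ p (f (i + 1)).1 (f i).2 ≤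
      ∑ i : Fin (n + 1), ellPow le τ p (f i).1 (f i).2 := by
  have hmem1 : ∀ i, (f i).1 ∈ IplusSet chron V ∪ V := by
    intro i; rcases hΔ (hf i) with h | h
    · exact h.1
    · exact h.2
  have hmem2 : ∀ i, (f i).2 ∈ IplusSet chron V ∪ V := by
    intro i; rcases hΔ (hf i) with h | h
    · exact h.2.1
    · rw [← h.1]; exact h.2
  have hlei : ∀ i, le (f i).1 (f i).2 := by
    intro i; rcases hΔ (hf i) with h | h
    · exact h.2.2.1
    · rw [← h.1]; exact hrefl _
  have hτeq : ∀ i, τ (f i).1 (f i).2 = τV (f i).2 - τV (f i).1 := by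
    intro i; rcases hΔ (hf i) with h | h
    · exact h.2.2.2.1.symm
    · have h0 := hkey _ _ (hmem1 i) (hmem2 i) (hlei i)
      have h1 := hτnn (f i).1 (f i).2
      have hba : τV (f i).2 - τV (f i).1 = 0 := by rw [← h.1]; ring
      linarith
  have hd : ∀ i, 0 ≤ τV (f i).2 - τV (f i).1 := by
    intro i; rw [← hτeq i]; exact hτnn _ _
  by_cases hall : ∀ i : Fin (n + 1), le (f (i + 1)).1 (f i).2
  · -- all comparable; reduce to real inequality
    have he : ∀ i : Fin (n + 1), 0 ≤ τV (f i).2 - τV (f (i + 1)).1 := by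
      intro i
      have := hkey _ _ (hmem1 (i + 1)) (hmem2 i) (hall i)
      have := hτnn (f (i + 1)).1 (f i).2
      linarith
    have hreal : ∑ i : Fin (n + 1), τ (f (i + 1)).1 (f i).2 ^ p ≤
        ∑ i : Fin (n + 1), (τV (f i).2 - τV (f i).1) ^ p := by
      have step1 : ∑ i : Fin (n + 1), τ (f (i + 1)).1 (f i).2 ^ p ≤
          ∑ i : Fin (n + 1), (τV (f i).2 - τV (f (i + 1)).1) ^ p := by
        refine Finset.sum_le_sum fun i _ => ?_
        exact Real.rpow_le_rpow (hτnn _ _)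
          (hkey _ _ (hmem1 (i + 1)) (hmem2 i) (hall i)) hp.1.le
      refine step1.trans ?_
      have := perm_aux hp (fun i => τV (f i).1) (fun i => τV (f i).2)
        (fun i j => hmono (f i) (hf i) (f j) (hf j)) hd (n + 1)
        (Equiv.addLeft (1 : Fin (n + 1)))
        (le_trans (Finset.card_le_card (Finset.subset_univ _)) (by simp))
        (fun i => by simpa [add_comm] using he i)
      simpa [add_comm] using this
    calc ∑ i : Fin (n + 1), ellPow le τ p (f (i + 1)).1 (f i).2
        = ((∑ i : Fin (n + 1), τ (f (i + 1)).1 (f i).2 ^ p : ℝ) : EReal) := by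
          rw [coe_sum_ereal]
          exact Finset.sum_congr rfl fun i _ => if_pos (hall i)
      _ ≤ ((∑ i : Fin (n + 1), (τV (f i).2 - τV (f i).1) ^ p : ℝ) : EReal) := by
          exact_mod_cast hreal
      _ = ∑ i : Fin (n + 1), ellPow le τ p (f i).1 (f i).2 := by
          rw [coe_sum_ereal]
          refine Finset.sum_congr rfl fun i _ => ?_
          rw [← hτeq i]
          exact (if_pos (hlei i)).symm
  · -- some term is ⊥
    push_neg at hall
    obtain ⟨i, hi⟩ := hall
    have hbot : ∑ j : Fin (n + 1), ellPow le τ p (f (j + 1)).1 (f j).2 = ⊥ := by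
      rw [← Finset.add_sum_erase _ _ (Finset.mem_univ i)]
      have : ellPow le τ p (f (i + 1)).1 (f i).2 = ⊥ := if_neg hi
      rw [this, EReal.bot_add]
    rw [hbot]
    exact bot_le
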